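/- arXiv:0704.1503 — 2 statements merged into one kernel-verified Lean document; each statement's English description precedes it below -/
import Mathlib

section
/- For every n ≥ 1 and 0 ≤ a ≤ n, the recursively defined operators X_i^±, K_i on V_a^n satisfy all the defining relations of U_q(sl_n): each K_i is invertible, the K_i pairwise commute, K_i X_j^± = q^{±a_{ij}} X_j^± K_i (with a_{ij} = 2, −1, 0 according as i = j, |i−j| = 1, |i−j| ≥ 2), X_i^+ X_j^- − X_j^- X_i^+ = δ_{ij}(K_i − K_i^{-1})/(q − q^{-1}), X_i^± X_j^± = X_j^± X_i^± when |i−j| ≥ 2, and the quantum Serre relations (X_i^±)² X_j^± − (q + q^{-1}) X_i^± X_j^± X_i^± + X_j^± (X_i^±)² = 0 when |i−j| = 1. Hence they determine an 𝔸-algebra homomorphism U_q(sl_n) → End_𝔸(V_a^n), making V_a^n a U_q(sl_n)-module. -/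
noncomputable section

open scoped TensorProduct

set_option maxHeartbeats 1000000
set_option synthInstance.maxHeartbeats 400000

/-- The ground field `𝔸 = ℚ(q)`. -/
abbrev A : Type := RatFunc ℚ

/-- The element `q ∈ 𝔸`. -/
def qq : A := RatFunc.X

/-- The set of `a`-element subsets of `{0, 1, …, n-1}` (a model for the
`a`-element subsets of `{1, …, n}`), the basis of `V_a^n`. -/
abbrev BS (n a : ℕ) : Type := {s : Finset ℕ // s ⊆ Finset.range n ∧ s.card = a}

instance BS.fintype (n a : ℕ) : Fintype (BS n a) :=
  Fintype.subtype ((Finset.range n).powerset.filter fun s => s.card = a) (by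
    intro s
    simp [Finset.mem_powerset, Finset.mem_filter])

/-- The fundamental representation `V_a^n`, as the `𝔸`-vector space with basis the
`a`-element subsets of an `n`-element set. -/
abbrev V (n a : ℕ) : Type := BS n a → A

/-- `i₋₁ : V_{a-1}^{n-1} → V_a^n` (here with indices shifted:
`iminus n a : V_a^n → V_{a+1}^{n+1}`), the inclusion of the summand of subsets containing
the new top element `n`. -/
def iminus (n a : ℕ) : V n a →ₗ[A] V (n+1) (a+1) where
  toFun f s := if h : n ∈ s.1 then
      f ⟨s.1.erase n, by
        constructor
        · intro x hx
          have hx' := Finset.mem_erase.mp hx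
          have hx2 := s.2.1 hx'.2
          simp only [Finset.mem_range] at hx2 ⊢
          omega
        · rw [Finset.card_erase_of_mem h, s.2.2]; omega⟩
    else 0
  map_add' f g := by
    funext s
    simp only [Pi.add_apply]
    by_cases h : n ∈ s.1 <;> simp [h]
  map_smul' c f := by
    funext s
    simp only [Pi.smul_apply, smul_eq_mul, RingHom.id_apply]
    by_cases h : n ∈ s.1 <;> simp [h]

/-- `i₀ : V_a^{n-1} → V_a^n` (as `izero n a : V_a^n → V_a^{n+1}`), the inclusion of the
summand of subsets not containing the new top element. -/
def izero (n a : ℕ) : V n a →ₗ[A] V (n+1) a where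
  toFun f s := if h : n ∈ s.1 then 0 else
      f ⟨s.1, by
        refine ⟨fun x hx => ?_, s.2.2⟩
        have hx2 := s.2.1 hx
        simp only [Finset.mem_range] at hx2 ⊢
        rcases Nat.lt_succ_iff_lt_or_eq.mp hx2 with h' | h'
        · exact h'
        · exact absurd (h' ▸ hx) h⟩
  map_add' f g := by
    funext s
    simp only [Pi.add_apply]
    by_cases h : n ∈ s.1 <;> simp [h]
  map_smul' c f := by
    funext s
    simp only [Pi.smul_apply, smul_eq_mul, RingHom.id_apply]
    by_cases h : n ∈ s.1 <;> simp [h]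

/-- `p₋₁ : V_a^n → V_{a-1}^{n-1}` (as `pminus n a : V_{a+1}^{n+1} → V_a^n`), the projection
onto the summand of subsets containing the top element. -/
def pminus (n a : ℕ) : V (n+1) (a+1) →ₗ[A] V n a where
  toFun f t := f ⟨insert n t.1, by
    have hn : n ∉ t.1 := fun h => by
      have := t.2.1 h; simp [Finset.mem_range] at this
    constructor
    · intro x hx
      rcases Finset.mem_insert.mp hx with rfl | hx
      · simp
      · have := t.2.1 hx; simp only [Finset.mem_range] at this ⊢; omega
    · rw [Finset.card_insert_of_notMem hn, t.2.2]⟩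
  map_add' f g := rfl
  map_smul' c f := rfl

/-- `p₀ : V_a^n → V_a^{n-1}` (as `pzero n a : V_a^{n+1} → V_a^n`), the projection onto the
summand of subsets not containing the top element. -/
def pzero (n a : ℕ) : V (n+1) a →ₗ[A] V n a where
  toFun f t := f ⟨t.1, by
    refine ⟨fun x hx => ?_, t.2.2⟩
    have := t.2.1 hx; simp only [Finset.mem_range] at this ⊢; omega⟩
  map_add' f g := rfl
  map_smul' c f := rfl

/-- The diagonal operator on `V_a^n` acting by the scalar `x` on basis subsets containing `m`
and by `y` on those not containing `m`; for `m = n-1` this is `x • i₋₁ p₋₁ + y • i₀ p₀`. -/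
def diagOp (n a m : ℕ) (x y : A) : Module.End A (V n a) where
  toFun f s := (if m ∈ s.1 then x else y) * f s
  map_add' f g := by
    funext s
    simp only [Pi.add_apply]
    ring
  map_smul' c f := by
    funext s
    simp only [Pi.smul_apply, smul_eq_mul, RingHom.id_apply]
    ring

/-- The recursively defined action of the generator `X_i^+` on `V_a^n`
(`XpOp n a i`, where `i` is the literal subscript, `1 ≤ i ≤ n-1`). -/
def XpOp : (n a i : ℕ) → Module.End A (V n a)
  | 0, _, _ => 0
  | 1, _, _ => 0
  | _+2, 0, _ => 0
  | n+2, a+1, i =>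
    if a + 1 = n + 2 then 0
    else if i = n + 1 then
      (iminus (n+1) a) ∘ₗ (izero n a) ∘ₗ (pminus n a) ∘ₗ (pzero (n+1) (a+1))
    else
      (iminus (n+1) a) ∘ₗ (XpOp (n+1) a i) ∘ₗ (pminus (n+1) a)
      + (izero (n+1) (a+1)) ∘ₗ (XpOp (n+1) (a+1) i) ∘ₗ (pzero (n+1) (a+1))

/-- The recursively defined action of the generator `X_i^-` on `V_a^n`. -/
def XmOp : (n a i : ℕ) → Module.End A (V n a)
  | 0, _, _ => 0
  | 1, _, _ => 0
  | _+2, 0, _ => 0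
  | n+2, a+1, i =>
    if a + 1 = n + 2 then 0
    else if i = n + 1 then
      (izero (n+1) (a+1)) ∘ₗ (iminus n a) ∘ₗ (pzero n a) ∘ₗ (pminus (n+1) a)
    else
      (iminus (n+1) a) ∘ₗ (XmOp (n+1) a i) ∘ₗ (pminus (n+1) a)
      + (izero (n+1) (a+1)) ∘ₗ (XmOp (n+1) (a+1) i) ∘ₗ (pzero (n+1) (a+1))

/-- The recursively defined action of the generator `K_i` on `V_a^n`.  The middle factors
`diagOp … 1 q` and `diagOp … q⁻¹ 1` are the operators `i₋₁ p₋₁ + q i₀ p₀` and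
`q⁻¹ i₋₁ p₋₁ + i₀ p₀` of the recursion. -/
def KOp : (n a i : ℕ) → Module.End A (V n a)
  | 0, _, _ => 1
  | 1, _, _ => 1
  | _+2, 0, _ => 1
  | n+2, a+1, i =>
    if a + 1 = n + 2 then 1
    else if i = n + 1 then
      (iminus (n+1) a) ∘ₗ (diagOp (n+1) a n 1 qq) ∘ₗ (pminus (n+1) a)
      + (izero (n+1) (a+1)) ∘ₗ (diagOp (n+1) (a+1) n qq⁻¹ 1) ∘ₗ (pzero (n+1) (a+1))
    else
      (iminus (n+1) a) ∘ₗ (KOp (n+1) a i) ∘ₗ (pminus (n+1) a)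
      + (izero (n+1) (a+1)) ∘ₗ (KOp (n+1) (a+1) i) ∘ₗ (pzero (n+1) (a+1))

/-- The recursively defined action of `K_i⁻¹` on `V_a^n` (the inverse of `KOp`),
given by the same recursion with `q` and `q⁻¹` interchanged. -/
def KinvOp : (n a i : ℕ) → Module.End A (V n a)
  | 0, _, _ => 1
  | 1, _, _ => 1
  | _+2, 0, _ => 1
  | n+2, a+1, i =>
    if a + 1 = n + 2 then 1
    else if i = n + 1 then
      (iminus (n+1) a) ∘ₗ (diagOp (n+1) a n 1 qq⁻¹) ∘ₗ (pminus (n+1) a)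
      + (izero (n+1) (a+1)) ∘ₗ (diagOp (n+1) (a+1) n qq 1) ∘ₗ (pzero (n+1) (a+1))
    else
      (iminus (n+1) a) ∘ₗ (KinvOp (n+1) a i) ∘ₗ (pminus (n+1) a)
      + (izero (n+1) (a+1)) ∘ₗ (KinvOp (n+1) (a+1) i) ∘ₗ (pzero (n+1) (a+1))
/-! ### The quantum group `U_q(sl_n)` by generators and relations.

We present the algebra with `m = n - 1` generators of each kind `K i, K i⁻¹, X i⁺, X i⁻`,
indexed by `i : Fin m` (so `i` corresponds to the subscript `i + 1 ∈ {1, …, n-1}`). -/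

/-- Generators of `U_q(sl_n)` (with `m = n-1`). -/
inductive UqGen (m : ℕ) : Type
  | K : Fin m → UqGen m
  | Kinv : Fin m → UqGen m
  | Xp : Fin m → UqGen m
  | Xm : Fin m → UqGen m

/-- The free `𝔸`-algebra on the generators. -/
abbrev FA (m : ℕ) : Type := FreeAlgebra A (UqGen m)

namespace FA
variable {m : ℕ}
def K (i : Fin m) : FA m := FreeAlgebra.ι A (UqGen.K i)
def Kinv (i : Fin m) : FA m := FreeAlgebra.ι A (UqGen.Kinv i)
def Xp (i : Fin m) : FA m := FreeAlgebra.ι A (UqGen.Xp i)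
def Xm (i : Fin m) : FA m := FreeAlgebra.ι A (UqGen.Xm i)
end FA

/-- The Cartan integers `(i,j)` of type `A_m`: `2` if `i = j`, `-1` if `|i-j| = 1`,
`0` if `|i-j| ≥ 2`. -/
def cart {m : ℕ} (i j : Fin m) : ℤ :=
  if i = j then 2 else if (i : ℕ) + 1 = j ∨ (j : ℕ) + 1 = i then -1 else 0

/-- The defining relations of `U_q(sl_n)`. -/
inductive uqRel (m : ℕ) : FA m → FA m → Prop
  | KKinv (i : Fin m) : uqRel m (FA.K i * FA.Kinv i) 1
  | KinvK (i : Fin m) : uqRel m (FA.Kinv i * FA.K i) 1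
  | KK (i j : Fin m) : uqRel m (FA.K i * FA.K j) (FA.K j * FA.K i)
  | KXp (i j : Fin m) : uqRel m (FA.K i * FA.Xp j) (qq ^ (cart i j) • (FA.Xp j * FA.K i))
  | KXm (i j : Fin m) : uqRel m (FA.K i * FA.Xm j) (qq ^ (-cart i j) • (FA.Xm j * FA.K i))
  | XpXm (i j : Fin m) :
      uqRel m (FA.Xp i * FA.Xm j - FA.Xm j * FA.Xp i)
        (if i = j then (qq - qq⁻¹)⁻¹ • (FA.K i - FA.Kinv i) else 0)
  | XpXp (i j : Fin m) (h : (i : ℕ) + 2 ≤ j ∨ (j : ℕ) + 2 ≤ i) :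
      uqRel m (FA.Xp i * FA.Xp j) (FA.Xp j * FA.Xp i)
  | XmXm (i j : Fin m) (h : (i : ℕ) + 2 ≤ j ∨ (j : ℕ) + 2 ≤ i) :
      uqRel m (FA.Xm i * FA.Xm j) (FA.Xm j * FA.Xm i)
  | serreP (i j : Fin m) (h : (i : ℕ) + 1 = j ∨ (j : ℕ) + 1 = i) :
      uqRel m (FA.Xp i ^ 2 * FA.Xp j - (qq + qq⁻¹) • (FA.Xp i * FA.Xp j * FA.Xp i)
        + FA.Xp j * FA.Xp i ^ 2) 0
  | serreM (i j : Fin m) (h : (i : ℕ) + 1 = j ∨ (j : ℕ) + 1 = i) :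
      uqRel m (FA.Xm i ^ 2 * FA.Xm j - (qq + qq⁻¹) • (FA.Xm i * FA.Xm j * FA.Xm i)
        + FA.Xm j * FA.Xm i ^ 2) 0

/-- The quantum group `U_q(sl_{m+1})`, presented by generators and relations.
For `U_q(sl_n)` take `m = n - 1`. -/
abbrev Uq (m : ℕ) : Type := RingQuot (uqRel m)

namespace Uq
variable {m : ℕ}
/-- The generator `K_{i+1}` of `U_q(sl_n)`. -/
def K (i : Fin m) : Uq m := RingQuot.mkAlgHom A (uqRel m) (FA.K i)
/-- The generator `K_{i+1}⁻¹` of `U_q(sl_n)`. -/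
def Kinv (i : Fin m) : Uq m := RingQuot.mkAlgHom A (uqRel m) (FA.Kinv i)
/-- The generator `X_{i+1}^+` of `U_q(sl_n)`. -/
def Xp (i : Fin m) : Uq m := RingQuot.mkAlgHom A (uqRel m) (FA.Xp i)
/-- The generator `X_{i+1}^-` of `U_q(sl_n)`. -/
def Xm (i : Fin m) : Uq m := RingQuot.mkAlgHom A (uqRel m) (FA.Xm i)
end Uq
/-! ### The duality maps `d_{a,n}`, triple invariants, and the pivotal elements `τ`. -/

/-- The sum-of-coefficients functional on `V_a^n`. -/
def sumF (n a : ℕ) : V n a →ₗ[A] A where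
  toFun f := ∑ s : BS n a, f s
  map_add' f g := by simp [Finset.sum_add_distrib]
  map_smul' c f := by simp [Finset.mul_sum]

/-- The "trivial" map `V_a^n → (V_c^n)^*`; when `V_a^n` and `V_c^n` are one-dimensional
(`a = 0` or `a = n`, and correspondingly for `c`) it sends the basis vector to the dual
basis vector.  Used for the base cases of `d_{a,n}`. -/
def dtriv (n a c : ℕ) : V n a →ₗ[A] Module.Dual A (V n c) :=
  LinearMap.smulRight (sumF n a) (sumF n c)

/-- The map `d_{a,n} : V_a^n → (V_{n-a}^n)^*`, defined recursively by
`d_{a,n} = i₀ ∘ d_{a-1,n-1} ∘ p₋₁ + (-q)^{-a} i₋₁ ∘ d_{a,n-1} ∘ p₀`, with both base cases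
sending the basis vector to the dual basis vector.  Here `dmap n a c` has target
`(V_c^n)^*`, to be used with `c = n - a`. -/
def dmap : (n a c : ℕ) → (V n a →ₗ[A] Module.Dual A (V n c))
  | 0, a, c => dtriv 0 a c
  | n+1, 0, c => dtriv (n+1) 0 c
  | n+1, a+1, c =>
    if a + 1 = n + 1 then dtriv (n+1) (a+1) c
    else
      match c with
      | 0 => 0
      | c+1 =>
        (pzero n (c+1)).dualMap ∘ₗ (dmap n a (c+1)) ∘ₗ (pminus n a)
        + ((-qq) ^ (a+1))⁻¹ •
            ((pminus n c).dualMap ∘ₗ (dmap n (a+1) c) ∘ₗ (pzero n (a+1)))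

section voutvin

open TensorProduct

/-- First term of the recursion for `v_out`: `(-1)^c q^{b+c} (i₋₁ ⊗ i₀ ⊗ i₀)`. -/
def vterm1 (n a b c : ℕ) (v : V n a ⊗[A] (V n b ⊗[A] V n c)) :
    V (n+1) (a+1) ⊗[A] (V (n+1) b ⊗[A] V (n+1) c) :=
  ((-1 : A)^c * qq^(b+c)) •
    (TensorProduct.map (iminus n a) (TensorProduct.map (izero n b) (izero n c)) v)

/-- Second term of the recursion for `v_out`: `(-1)^a q^c (i₀ ⊗ i₋₁ ⊗ i₀)`. -/
def vterm2 (n a b c : ℕ) (v : V n a ⊗[A] (V n b ⊗[A] V n c)) :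
    V (n+1) a ⊗[A] (V (n+1) (b+1) ⊗[A] V (n+1) c) :=
  ((-1 : A)^a * qq^c) •
    (TensorProduct.map (izero n a) (TensorProduct.map (iminus n b) (izero n c)) v)

/-- Third term of the recursion for `v_out`: `(-1)^b (i₀ ⊗ i₀ ⊗ i₋₁)`. -/
def vterm3 (n a b c : ℕ) (v : V n a ⊗[A] (V n b ⊗[A] V n c)) :
    V (n+1) a ⊗[A] (V (n+1) b ⊗[A] V (n+1) (c+1)) :=
  ((-1 : A)^b) •
    (TensorProduct.map (izero n a) (TensorProduct.map (izero n b) (iminus n c)) v)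

/-- The triple invariant `v_out^n_{a,b,c} ∈ V_a^n ⊗ V_b^n ⊗ V_c^n` (intended for
`a + b + c = n`), defined by the recursion of Definition `defn:trivalent-vertices`,
omitting any term with a negative subscript. -/
def voutE : (n a b c : ℕ) → V n a ⊗[A] (V n b ⊗[A] V n c)
  | 0, _, _, _ => (fun _ => (1:A)) ⊗ₜ[A] ((fun _ => (1:A)) ⊗ₜ[A] (fun _ => (1:A)))
  | n+1, 0, 0, 0 => 0
  | n+1, a+1, 0, 0 => vterm1 n a 0 0 (voutE n a 0 0)
  | n+1, 0, b+1, 0 => vterm2 n 0 b 0 (voutE n 0 b 0)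
  | n+1, 0, 0, c+1 => vterm3 n 0 0 c (voutE n 0 0 c)
  | n+1, a+1, b+1, 0 =>
      vterm1 n a (b+1) 0 (voutE n a (b+1) 0) + vterm2 n (a+1) b 0 (voutE n (a+1) b 0)
  | n+1, a+1, 0, c+1 =>
      vterm1 n a 0 (c+1) (voutE n a 0 (c+1)) + vterm3 n (a+1) 0 c (voutE n (a+1) 0 c)
  | n+1, 0, b+1, c+1 =>
      vterm2 n 0 b (c+1) (voutE n 0 b (c+1)) + vterm3 n 0 (b+1) c (voutE n 0 (b+1) c)
  | n+1, a+1, b+1, c+1 =>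
      vterm1 n a (b+1) (c+1) (voutE n a (b+1) (c+1))
      + vterm2 n (a+1) b (c+1) (voutE n (a+1) b (c+1))
      + vterm3 n (a+1) (b+1) c (voutE n (a+1) (b+1) c)

/-- First term of the recursion for `v_in`: `(-1)^c (…) ∘ (p₋₁ ⊗ p₀ ⊗ p₀)`. -/
def wterm1 (n a b c : ℕ) (φ : V n a ⊗[A] (V n b ⊗[A] V n c) →ₗ[A] A) :
    V (n+1) (a+1) ⊗[A] (V (n+1) b ⊗[A] V (n+1) c) →ₗ[A] A :=
  ((-1 : A)^c) •
    (φ ∘ₗ TensorProduct.map (pminus n a) (TensorProduct.map (pzero n b) (pzero n c)))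

/-- Second term of the recursion for `v_in`: `(-1)^a q^{-a} (…) ∘ (p₀ ⊗ p₋₁ ⊗ p₀)`. -/
def wterm2 (n a b c : ℕ) (φ : V n a ⊗[A] (V n b ⊗[A] V n c) →ₗ[A] A) :
    V (n+1) a ⊗[A] (V (n+1) (b+1) ⊗[A] V (n+1) c) →ₗ[A] A :=
  ((-1 : A)^a * (qq^a)⁻¹) •
    (φ ∘ₗ TensorProduct.map (pzero n a) (TensorProduct.map (pminus n b) (pzero n c)))

/-- Third term of the recursion for `v_in`: `(-1)^b q^{-a-b} (…) ∘ (p₀ ⊗ p₀ ⊗ p₋₁)`. -/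
def wterm3 (n a b c : ℕ) (φ : V n a ⊗[A] (V n b ⊗[A] V n c) →ₗ[A] A) :
    V (n+1) a ⊗[A] (V (n+1) b ⊗[A] V (n+1) (c+1)) →ₗ[A] A :=
  ((-1 : A)^b * (qq^(a+b))⁻¹) •
    (φ ∘ₗ TensorProduct.map (pzero n a) (TensorProduct.map (pzero n b) (pminus n c)))

/-- The triple coinvariant `v_in^n_{a,b,c} : V_a^n ⊗ V_b^n ⊗ V_c^n → 𝔸` (intended for
`a + b + c = n`), defined recursively, omitting any term with a negative subscript. -/
def vinE : (n a b c : ℕ) → (V n a ⊗[A] (V n b ⊗[A] V n c) →ₗ[A] A)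
  | 0, a, b, c =>
      (LinearMap.mul' A A) ∘ₗ
        TensorProduct.map (sumF 0 a)
          ((LinearMap.mul' A A) ∘ₗ TensorProduct.map (sumF 0 b) (sumF 0 c))
  | n+1, 0, 0, 0 => 0
  | n+1, a+1, 0, 0 => wterm1 n a 0 0 (vinE n a 0 0)
  | n+1, 0, b+1, 0 => wterm2 n 0 b 0 (vinE n 0 b 0)
  | n+1, 0, 0, c+1 => wterm3 n 0 0 c (vinE n 0 0 c)
  | n+1, a+1, b+1, 0 =>
      wterm1 n a (b+1) 0 (vinE n a (b+1) 0) + wterm2 n (a+1) b 0 (vinE n (a+1) b 0)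
  | n+1, a+1, 0, c+1 =>
      wterm1 n a 0 (c+1) (vinE n a 0 (c+1)) + wterm3 n (a+1) 0 c (vinE n (a+1) 0 c)
  | n+1, 0, b+1, c+1 =>
      wterm2 n 0 b (c+1) (vinE n 0 b (c+1)) + wterm3 n 0 (b+1) c (vinE n 0 (b+1) c)
  | n+1, a+1, b+1, c+1 =>
      wterm1 n a (b+1) (c+1) (vinE n a (b+1) (c+1))
      + wterm2 n (a+1) b (c+1) (vinE n (a+1) b (c+1))
      + wterm3 n (a+1) (b+1) c (vinE n (a+1) (b+1) c)

end voutvin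

/-- The operator `∏_{j=1}^{n-1} K_j^j` on `V_a^n`. -/
def kjOp (n a : ℕ) : Module.End A (V n a) :=
  (List.ofFn fun i : Fin (n-1) => (KOp n a ((i : ℕ)+1)) ^ ((i : ℕ)+1)).prod

/-- The pivotal operator `τ_n = ∏_{j=1}^{n-1} K_j^{j(n-j)}` on `V_a^n`. -/
def tauOp (n a : ℕ) : Module.End A (V n a) :=
  (List.ofFn fun i : Fin (n-1) => (KOp n a ((i : ℕ)+1)) ^ (((i : ℕ)+1) * (n - ((i : ℕ)+1)))).prod

/-- The inverse pivotal operator `τ_n⁻¹ = ∏_{j=1}^{n-1} K_j^{-j(n-j)}` on `V_a^n`. -/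
def tauinvOp (n a : ℕ) : Module.End A (V n a) :=
  (List.ofFn fun i : Fin (n-1) => (KinvOp n a ((i : ℕ)+1)) ^ (((i : ℕ)+1) * (n - ((i : ℕ)+1)))).prod

/-- The element `τ_n = ∏_{j=1}^{n-1} K_j^{j(n-j)} ∈ U_q(sl_n)`. -/
def tauU (n : ℕ) : Uq (n-1) :=
  (List.ofFn fun i : Fin (n-1) => (Uq.K i) ^ (((i : ℕ)+1) * (n - ((i : ℕ)+1)))).prod

/-- The Cartan integers for literal subscripts `i, j ∈ {1, …, n-1}`. -/
def cartN (i j : ℕ) : ℤ :=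
  if i = j then 2 else if i + 1 = j ∨ j + 1 = i then -1 else 0

/-!
Extension by zero embeds `V_a^n` into the space `Fock` of all functions on finite subsets of `ℕ`.
There the generators act by operators that involve neither `n` nor `a`: `(X_i^+ f)(s)` is
the value of `f` at `s` with `i` replaced by `i - 1` (if `i ∈ s` and `i - 1 ∉ s`, and `0`
otherwise), `X_i^-` makes the reverse replacement, and `K_i` multiplies `f(s)` by
`q ^ ([i ∈ s] - [i - 1 ∈ s])`.
Each of these operators sends the value at `s` to a multiple of the value at one other set, so a
product of them is again of this form, and the relations of `U_q(sl_n)` reduce to bookkeeping of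
which of `i - 1, i, i + 1` lie in `s`.

The recursive operators are the restrictions of these, by induction on `n`: for `i < n - 1` the
recursion is the direct sum along `V_a^n = V_{a-1}^{n-1} ⊕ V_a^{n-1}`, which the operators on
`Fock` respect because they do not touch the element `n - 1`; for `i = n - 1` the recursion is
an explicit product of inclusions and projections. As the embedding is injective, the relations
hold on `V_a^n`.
-/

open Finset

abbrev Fock : Type := Finset ℕ → A

open Classical in
def monomialOp (P : Finset ℕ → Prop) (m : Finset ℕ → Finset ℕ) (c : Finset ℕ → A) :
    Module.End A Fock where
  toFun f s := if P s then c s * f (m s) else 0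
  map_add' f g := by ext s; by_cases h : P s <;> simp [h, mul_add]
  map_smul' r f := by ext s; by_cases h : P s <;> simp [h, mul_left_comm]

section monomialOp

variable {P Q : Finset ℕ → Prop} {m m' : Finset ℕ → Finset ℕ} {c c' : Finset ℕ → A}

open Classical in
lemma monomialOp_apply (f : Fock) (s : Finset ℕ) :
    monomialOp P m c f s = if P s then c s * f (m s) else 0 := rfl

lemma monomialOp_mul (P₁ P₂ m₁ m₂ c₁ c₂) :
    monomialOp P₁ m₁ c₁ * monomialOp P₂ m₂ c₂
      = monomialOp (fun s => P₁ s ∧ P₂ (m₁ s)) (fun s => m₂ (m₁ s))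
          (fun s => c₁ s * c₂ (m₁ s)) := by
  ext f s
  simp only [Module.End.mul_apply, monomialOp_apply]
  split_ifs <;> simp_all [mul_assoc]

lemma monomialOp_congr (hP : ∀ s, P s ↔ Q s) (h : ∀ s, P s → m s = m' s ∧ c s = c' s) :
    monomialOp P m c = monomialOp Q m' c' := by
  ext f s
  simp only [monomialOp_apply]
  split_ifs <;> simp_all

lemma monomialOp_eq_zero (hP : ∀ s, ¬ P s) : monomialOp P m c = 0 := by
  ext f s
  simp [monomialOp_apply, hP]

lemma monomialOp_id_one : monomialOp (fun _ => True) id (fun _ => 1) = 1 := by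
  ext f s
  simp [monomialOp_apply]

lemma smul_monomialOp (r : A) : r • monomialOp P m c = monomialOp P m (fun s => r * c s) := by
  ext f s
  simp only [LinearMap.smul_apply, Pi.smul_apply, monomialOp_apply, smul_eq_mul]
  split_ifs <;> simp [mul_assoc]

end monomialOp

lemma qq_sub_qq_inv_ne_zero : qq - qq⁻¹ ≠ 0 := fun h => by
  have := congrArg RatFunc.intDegree (sub_eq_zero.1 h)
  rw [RatFunc.intDegree_inv, qq, RatFunc.intDegree_X] at this
  omega

lemma cart_eq_cartN {m : ℕ} (i j : Fin m) : cart i j = cartN (i + 1) (j + 1) := by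
  simp only [cart, cartN, Fin.ext_iff]
  split_ifs <;> omega

namespace Fock

def Xp (i : ℕ) : Module.End A Fock :=
  monomialOp (fun s => i ∈ s ∧ i - 1 ∉ s) (fun s => insert (i - 1) (s.erase i)) fun _ => 1

def Xm (i : ℕ) : Module.End A Fock :=
  monomialOp (fun s => i - 1 ∈ s ∧ i ∉ s) (fun s => insert i (s.erase (i - 1))) fun _ => 1

def weight (i : ℕ) (s : Finset ℕ) : ℤ :=
  (if i ∈ s then 1 else 0) - (if i - 1 ∈ s then 1 else 0)

def K (i : ℕ) (x : A) : Module.End A Fock :=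
  monomialOp (fun _ => True) id fun s => x ^ weight i s

variable {i j : ℕ}

lemma weight_move_down (hi : 1 ≤ i) (hj : 1 ≤ j) {s : Finset ℕ}
    (h : j ∈ s ∧ j - 1 ∉ s) :
    weight i s = cartN i j + weight i (insert (j - 1) (s.erase j)) := by
  grind [weight, cartN]

lemma weight_move_up (hi : 1 ≤ i) (hj : 1 ≤ j) {s : Finset ℕ}
    (h : j - 1 ∈ s ∧ j ∉ s) :
    weight i s = -cartN i j + weight i (insert j (s.erase (j - 1))) := by
  grind [weight, cartN]

lemma K_mul_K (x y : A) :
    K i x * K j y = monomialOp (fun _ => True) id fun s => x ^ weight i s * y ^ weight j s := by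
  simp only [K, monomialOp_mul]
  exact monomialOp_congr (fun _ => and_self_iff) fun _ _ => ⟨rfl, rfl⟩

lemma K_comm (x y : A) : K i x * K j y = K j y * K i x := by
  simp only [K_mul_K, mul_comm]

lemma K_mul_K_inv {x : A} (hx : x ≠ 0) : K i x * K i x⁻¹ = 1 := by
  rw [K_mul_K, ← monomialOp_id_one]
  exact monomialOp_congr (fun _ => Iff.rfl) fun s _ =>
    ⟨rfl, by rw [inv_zpow, mul_inv_cancel₀ (zpow_ne_zero _ hx)]⟩

lemma K_mul_Xp {x : A} (hx : x ≠ 0) (hi : 1 ≤ i) (hj : 1 ≤ j) :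
    K i x * Xp j = x ^ cartN i j • (Xp j * K i x) := by
  simp only [K, Xp, monomialOp_mul, smul_monomialOp]
  refine monomialOp_congr (fun s => ?_) fun s hs => ⟨rfl, ?_⟩
  · simp [and_comm]
  · simp only [mul_one, one_mul]
    rw [weight_move_down (s := s) hi hj hs.2, zpow_add₀ hx]

lemma K_mul_Xm {x : A} (hx : x ≠ 0) (hi : 1 ≤ i) (hj : 1 ≤ j) :
    K i x * Xm j = x ^ (-cartN i j) • (Xm j * K i x) := by
  simp only [K, Xm, monomialOp_mul, smul_monomialOp]
  refine monomialOp_congr (fun s => ?_) fun s hs => ⟨rfl, ?_⟩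
  · simp [and_comm]
  · simp only [mul_one, one_mul]
    rw [weight_move_up (s := s) hi hj hs.2, zpow_add₀ hx]

lemma Xp_mul_Xm_sub_Xm_mul_Xp {x : A} (hx : x - x⁻¹ ≠ 0) (hi : 1 ≤ i) :
    Xp i * Xm i - Xm i * Xp i = (x - x⁻¹)⁻¹ • (K i x - K i x⁻¹) := by
  ext f s
  simp only [Xp, Xm, K, monomialOp_mul, LinearMap.sub_apply, LinearMap.smul_apply, Pi.sub_apply,
    Pi.smul_apply, smul_eq_mul, monomialOp_apply, weight, mem_insert, mem_erase, id]
  have hne : i - 1 ≠ i := by omega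
  by_cases h₁ : i ∈ s <;> by_cases h₂ : i - 1 ∈ s <;> simp [h₁, h₂, hne, hne.symm]
  · linear_combination (-f s) * inv_mul_cancel₀ hx
  · linear_combination f s * inv_mul_cancel₀ hx

lemma Xp_mul_Xm_comm (hij : i ≠ j) : Xp i * Xm j = Xm j * Xp i := by
  simp only [Xp, Xm, monomialOp_mul]
  refine monomialOp_congr (fun s => ?_) fun s hs => ⟨?_, rfl⟩
  · grind
  · ext; grind

lemma Xp_comm (h : i + 2 ≤ j ∨ j + 2 ≤ i) : Xp i * Xp j = Xp j * Xp i := by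
  simp only [Xp, monomialOp_mul]
  refine monomialOp_congr (fun s => ?_) fun s hs => ⟨?_, rfl⟩
  · grind
  · ext; grind

lemma Xm_comm (h : i + 2 ≤ j ∨ j + 2 ≤ i) : Xm i * Xm j = Xm j * Xm i := by
  simp only [Xm, monomialOp_mul]
  refine monomialOp_congr (fun s => ?_) fun s hs => ⟨?_, rfl⟩
  · grind
  · ext; grind

lemma Xp_mul_self : Xp i * Xp i = 0 := by
  simp only [Xp, monomialOp_mul]
  exact monomialOp_eq_zero fun s hs => by grind

lemma Xm_mul_self : Xm i * Xm i = 0 := by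
  simp only [Xm, monomialOp_mul]
  exact monomialOp_eq_zero fun s hs => by grind

lemma Xp_mul_Xp_mul_Xp : Xp i * Xp j * Xp i = 0 := by
  simp only [Xp, monomialOp_mul]
  exact monomialOp_eq_zero fun s hs => by grind

lemma Xm_mul_Xm_mul_Xm : Xm i * Xm j * Xm i = 0 := by
  simp only [Xm, monomialOp_mul]
  exact monomialOp_eq_zero fun s hs => by grind

def gen (m : ℕ) : UqGen m → Module.End A Fock
  | .K i => K (i + 1) qq
  | .Kinv i => K (i + 1) qq⁻¹
  | .Xp i => Xp (i + 1)
  | .Xm i => Xm (i + 1)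

lemma lift_gen_eq_of_uqRel {m : ℕ} {x y : FA m} (h : uqRel m x y) :
    FreeAlgebra.lift A (gen m) x = FreeAlgebra.lift A (gen m) y := by
  have hq : qq ≠ 0 := RatFunc.X_ne_zero
  induction h <;>
    simp only [map_mul, map_one, map_sub, map_add, map_smul, map_pow, map_zero, FA.K, FA.Kinv,
      FA.Xp, FA.Xm, FreeAlgebra.lift_ι_apply, gen, cart_eq_cartN]
  case KKinv i => exact K_mul_K_inv hq
  case KinvK i => simpa using K_mul_K_inv (i := i + 1) (inv_ne_zero hq)
  case KK i j => exact K_comm _ _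
  case KXp i j => exact K_mul_Xp hq (by omega) (by omega)
  case KXm i j => exact K_mul_Xm hq (by omega) (by omega)
  case XpXm i j =>
    split_ifs with hij
    · subst hij
      simp only [map_smul, map_sub, FreeAlgebra.lift_ι_apply, gen]
      exact Xp_mul_Xm_sub_Xm_mul_Xp qq_sub_qq_inv_ne_zero (Nat.le_add_left 1 _)
    · rw [Xp_mul_Xm_comm (i := i + 1) (j := j + 1) (by simpa [Fin.ext_iff] using hij), sub_self,
        map_zero]
  case XpXp i j h => exact Xp_comm (by omega)
  case XmXm i j h => exact Xm_comm (by omega)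
  case serreP i j h => simp [sq, Xp_mul_self, Xp_mul_Xp_mul_Xp]
  case serreM i j h => simp [sq, Xm_mul_self, Xm_mul_Xm_mul_Xm]

-- Named after their effect on indicator functions: `insertAt x` sends the indicator of `t ∌ x`
-- to that of `insert x t`, and `eraseAt x` sends the indicator of `t ∋ x` to that of `t.erase x`.
def insertAt (x : ℕ) : Module.End A Fock := monomialOp (x ∈ ·) (·.erase x) fun _ => 1

def eraseAt (x : ℕ) : Module.End A Fock := monomialOp (x ∉ ·) (insert x) fun _ => 1

def avoid (x : ℕ) : Module.End A Fock := monomialOp (x ∉ ·) id fun _ => 1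

def diag (x : ℕ) (y z : A) : Module.End A Fock :=
  monomialOp (fun _ => True) id fun s => if x ∈ s then y else z

section monomialOp

variable {P : Finset ℕ → Prop} {m : Finset ℕ → Finset ℕ} {c : Finset ℕ → A} {x : ℕ}

lemma monomialOp_commute_avoid (h : ∀ s, P s → (x ∈ m s ↔ x ∈ s)) :
    Commute (monomialOp P m c) (avoid x) := by
  simp only [Commute, SemiconjBy, avoid, monomialOp_mul]
  exact monomialOp_congr (fun s => by grind) fun s _ => ⟨rfl, by simp⟩

lemma monomialOp_commute_eraseAt (h : ∀ s, P s → (x ∈ m s ↔ x ∈ s))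
    (hP : ∀ s, x ∉ s → (P (insert x s) ↔ P s))
    (hm : ∀ s, x ∉ s → P s → m (insert x s) = insert x (m s) ∧ c (insert x s) = c s) :
    Commute (monomialOp P m c) (eraseAt x) := by
  simp only [Commute, SemiconjBy, eraseAt, monomialOp_mul]
  refine monomialOp_congr (fun s => by grind) fun s hs => ?_
  have hx : x ∉ s := fun hx => hs.2 ((h s hs.1).2 hx)
  obtain ⟨hm, hc⟩ := hm s hx hs.1
  simp [hm, hc]

end monomialOp

variable {x : ℕ}

lemma insertAt_mul_eraseAt_add_avoid_mul_avoid :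
    insertAt x * eraseAt x + avoid x * avoid x = 1 := by
  ext f s
  by_cases hx : x ∈ s <;> simp [insertAt, eraseAt, avoid, monomialOp_apply, hx, insert_erase]

lemma Xp_commute_avoid (h : i < x) : Commute (Xp i) (avoid x) :=
  monomialOp_commute_avoid fun s _ => by grind

lemma Xp_commute_eraseAt (h : i < x) : Commute (Xp i) (eraseAt x) :=
  monomialOp_commute_eraseAt (fun s _ => by grind) (fun s _ => by grind)
    fun s _ _ => ⟨by ext; grind, rfl⟩

lemma Xm_commute_avoid (h : i < x) : Commute (Xm i) (avoid x) :=
  monomialOp_commute_avoid fun s _ => by grind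

lemma Xm_commute_eraseAt (h : i < x) : Commute (Xm i) (eraseAt x) :=
  monomialOp_commute_eraseAt (fun s _ => by grind) (fun s _ => by grind)
    fun s _ _ => ⟨by ext; grind, rfl⟩

lemma K_commute_avoid (y : A) : Commute (K i y) (avoid x) :=
  monomialOp_commute_avoid fun _ _ => Iff.rfl

lemma K_commute_eraseAt (y : A) (h : i < x) : Commute (K i y) (eraseAt x) :=
  monomialOp_commute_eraseAt (fun _ _ => Iff.rfl) (fun _ _ => Iff.rfl)
    fun s _ _ => ⟨rfl, by simp only [weight]; grind⟩

lemma Xp_succ_eq (n : ℕ) :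
    Xp (n + 1) = insertAt (n + 1) * avoid n * eraseAt n * avoid (n + 1) := by
  simp only [insertAt, avoid, eraseAt, Xp, monomialOp_mul]
  refine monomialOp_congr (fun s => ?_) fun s hs => ⟨?_, by simp⟩
  · grind
  · ext; grind

lemma Xm_succ_eq (n : ℕ) :
    Xm (n + 1) = avoid (n + 1) * insertAt n * avoid n * eraseAt (n + 1) := by
  simp only [insertAt, avoid, eraseAt, Xm, monomialOp_mul]
  refine monomialOp_congr (fun s => ?_) fun s hs => ⟨?_, by simp⟩
  · grind
  · ext; grind

lemma K_succ_eq (y : A) (n : ℕ) :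
    K (n + 1) y = insertAt (n + 1) * diag n 1 y * eraseAt (n + 1)
      + avoid (n + 1) * diag n y⁻¹ 1 * avoid (n + 1) := by
  ext f s
  simp only [LinearMap.add_apply, Module.End.mul_apply, insertAt, avoid, eraseAt, diag, K, weight,
    monomialOp_apply, Pi.add_apply]
  by_cases h₁ : n + 1 ∈ s <;> by_cases h₂ : n ∈ s <;> simp [h₁, h₂, insert_erase]

end Fock

open Classical in
def toFock (n a : ℕ) : V n a →ₗ[A] Fock where
  toFun f t := if h : t ⊆ range n ∧ t.card = a then f ⟨t, h⟩ else 0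
  map_add' f g := by ext t; by_cases h : t ⊆ range n ∧ t.card = a <;> simp [h]
  map_smul' r f := by ext t; by_cases h : t ⊆ range n ∧ t.card = a <;> simp [h]

section toFock

variable {n a : ℕ}

open Classical in
lemma toFock_apply (f : V n a) (t : Finset ℕ) :
    toFock n a f t = if h : t ⊆ range n ∧ t.card = a then f ⟨t, h⟩ else 0 := rfl

lemma toFock_injective : Function.Injective (toFock n a) := fun f g h =>
  funext fun s => by simpa [toFock_apply, s.2] using congrFun h s.1

lemma subset_range_succ_and_card_succ_iff {t : Finset ℕ} (h : n ∈ t) :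
    t ⊆ range (n + 1) ∧ t.card = a + 1 ↔ t.erase n ⊆ range n ∧ (t.erase n).card = a := by
  have := card_pos.mpr ⟨n, h⟩
  rw [range_add_one, subset_insert_iff, card_erase_of_mem h]
  exact and_congr_right fun _ => by omega

lemma subset_range_succ_and_card_iff {t : Finset ℕ} (h : n ∉ t) :
    t ⊆ range (n + 1) ∧ t.card = a ↔ t ⊆ range n ∧ t.card = a := by
  rw [range_add_one, subset_insert_iff_of_notMem h]

lemma toFock_iminus (f : V n a) :
    toFock (n + 1) (a + 1) (iminus n a f) = Fock.insertAt n (toFock n a f) := by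
  funext t
  simp only [toFock_apply, Fock.insertAt, monomialOp_apply, iminus, LinearMap.coe_mk,
    AddHom.coe_mk, one_mul]
  by_cases hn : n ∈ t <;> simp [hn, subset_range_succ_and_card_succ_iff]

lemma toFock_izero (f : V n a) :
    toFock (n + 1) a (izero n a f) = Fock.avoid n (toFock n a f) := by
  funext t
  simp only [toFock_apply, Fock.avoid, monomialOp_apply, izero, LinearMap.coe_mk, AddHom.coe_mk,
    one_mul, id]
  by_cases hn : n ∈ t <;> simp [hn, subset_range_succ_and_card_iff]

lemma toFock_pminus (f : V (n + 1) (a + 1)) :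
    toFock n a (pminus n a f) = Fock.eraseAt n (toFock (n + 1) (a + 1) f) := by
  funext t
  simp only [toFock_apply, Fock.eraseAt, monomialOp_apply, pminus, LinearMap.coe_mk,
    AddHom.coe_mk, one_mul]
  by_cases hn : n ∈ t
  · have : ¬ t ⊆ range n := fun h => notMem_range_self (h hn)
    simp [hn, this]
  · simp [hn, insert_subset_iff, range_add_one, subset_insert_iff_of_notMem hn]

lemma toFock_pzero (f : V (n + 1) a) :
    toFock n a (pzero n a f) = Fock.avoid n (toFock (n + 1) a f) := by
  funext t
  simp only [toFock_apply, Fock.avoid, monomialOp_apply, pzero, LinearMap.coe_mk, AddHom.coe_mk,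
    one_mul, id]
  by_cases hn : n ∈ t
  · have : ¬ t ⊆ range n := fun h => notMem_range_self (h hn)
    simp [hn, this]
  · simp [hn, subset_range_succ_and_card_iff]

lemma toFock_diagOp (x : ℕ) (y z : A) (f : V n a) :
    toFock n a (diagOp n a x y z f) = Fock.diag x y z (toFock n a f) := by
  funext t
  simp only [toFock_apply, Fock.diag, monomialOp_apply, diagOp, LinearMap.coe_mk, AddHom.coe_mk,
    id]
  split_ifs <;> simp

lemma toFock_zero_apply_of_ne_empty (f : V n 0) {t : Finset ℕ} (ht : t ≠ ∅) :
    toFock n 0 f t = 0 := by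
  simp [toFock_apply, ht]

lemma toFock_self_apply_of_ne_range (f : V n n) {t : Finset ℕ} (ht : t ≠ range n) :
    toFock n n f t = 0 := by
  rw [toFock_apply, dif_neg]
  rintro ⟨hsub, hcard⟩
  exact ht (eq_of_subset_of_card_le hsub (by simp [hcard]))

end toFock

namespace Fock

variable {n i : ℕ}

lemma Xp_toFock_zero (f : V n 0) : Xp i (toFock n 0 f) = 0 := by
  funext s
  simp [Xp, monomialOp_apply, toFock_zero_apply_of_ne_empty]

lemma Xm_toFock_zero (f : V n 0) : Xm i (toFock n 0 f) = 0 := by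
  funext s
  simp [Xm, monomialOp_apply, toFock_zero_apply_of_ne_empty]

lemma K_toFock_zero (y : A) (f : V n 0) : K i y (toFock n 0 f) = toFock n 0 f := by
  funext s
  by_cases hs : s = ∅
  · simp [K, monomialOp_apply, weight, hs]
  · simp [K, monomialOp_apply, toFock_zero_apply_of_ne_empty f hs]

lemma Xp_toFock_self (hi : 1 ≤ i) (hin : i < n) (f : V n n) : Xp i (toFock n n f) = 0 := by
  funext s
  simp only [Xp, monomialOp_apply]
  split_ifs
  · have hi' : i ∈ range n := mem_range.2 hin
    rw [toFock_self_apply_of_ne_range f fun hs => by rw [← hs] at hi'; grind, mul_zero]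
    rfl
  · rfl

lemma Xm_toFock_self (hi : 1 ≤ i) (hin : i < n) (f : V n n) : Xm i (toFock n n f) = 0 := by
  funext s
  simp only [Xm, monomialOp_apply]
  split_ifs
  · have hi' : i - 1 ∈ range n := mem_range.2 (by omega)
    rw [toFock_self_apply_of_ne_range f fun hs => by rw [← hs] at hi'; grind, mul_zero]
    rfl
  · rfl

lemma K_toFock_self (hi : 1 ≤ i) (hin : i < n) (y : A) (f : V n n) :
    K i y (toFock n n f) = toFock n n f := by
  funext s
  by_cases hs : s = range n
  · simp [K, monomialOp_apply, weight, hs, hin, (by omega : i - 1 < n)]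
  · simp [K, monomialOp_apply, toFock_self_apply_of_ne_range f hs]

end Fock

def directSumOp {n a : ℕ} (F : Module.End A (V n a)) (G : Module.End A (V n (a + 1))) :
    Module.End A (V (n + 1) (a + 1)) :=
  iminus n a ∘ₗ F ∘ₗ pminus n a + izero n (a + 1) ∘ₗ G ∘ₗ pzero n (a + 1)

lemma toFock_directSumOp {x b : ℕ} {U : Module.End A Fock}
    (hU₁ : Commute U (Fock.avoid x)) (hU₂ : Commute U (Fock.eraseAt x))
    {F : Module.End A (V x b)} {G : Module.End A (V x (b + 1))}
    (hF : ∀ f, toFock x b (F f) = U (toFock x b f))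
    (hG : ∀ f, toFock x (b + 1) (G f) = U (toFock x (b + 1) f)) (f : V (x + 1) (b + 1)) :
    toFock (x + 1) (b + 1) (directSumOp F G f) = U (toFock (x + 1) (b + 1) f) := by
  simp only [directSumOp, LinearMap.add_apply, LinearMap.comp_apply, map_add, toFock_iminus,
    toFock_izero, hF, hG, toFock_pminus, toFock_pzero]
  rw [← Module.End.mul_apply U, hU₂.eq, ← Module.End.mul_apply U, hU₁.eq]
  simpa using LinearMap.congr_fun Fock.insertAt_mul_eraseAt_add_avoid_mul_avoid _

-- The hypotheses follow the case split shared by `XpOp`, `XmOp`, `KOp` and `KinvOp`.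
lemma toFock_eq_of_recursion {i : ℕ} (hi : 1 ≤ i) (F : ∀ n a, Module.End A (V n a))
    (U : Module.End A Fock)
    (hcomm : ∀ x, i < x → Commute U (Fock.avoid x) ∧ Commute U (Fock.eraseAt x))
    (hzero : ∀ k (f : V (k + 2) 0), toFock (k + 2) 0 (F (k + 2) 0 f) = U (toFock (k + 2) 0 f))
    (hfull : ∀ k (f : V (k + 2) (k + 2)), i < k + 2 →
      toFock (k + 2) (k + 2) (F (k + 2) (k + 2) f) = U (toFock (k + 2) (k + 2) f))
    (htop : ∀ k b (f : V (k + 2) (b + 1)), i = k + 1 → b ≠ k + 1 →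
      toFock (k + 2) (b + 1) (F (k + 2) (b + 1) f) = U (toFock (k + 2) (b + 1) f))
    (hstep : ∀ k b, i ≤ k → b ≠ k + 1 →
      F (k + 2) (b + 1) = directSumOp (F (k + 1) b) (F (k + 1) (b + 1)))
    (n a : ℕ) (f : V n a) (hin : i < n) : toFock n a (F n a f) = U (toFock n a f) := by
  induction n generalizing a with
  | zero => omega
  | succ n ih =>
    obtain ⟨k, rfl⟩ : ∃ k, n = k + 1 := ⟨n - 1, by omega⟩
    rcases a with _ | b
    · exact hzero k f
    · by_cases hb : b = k + 1
      · subst hb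
        exact hfull k f hin
      · by_cases hik : i = k + 1
        · exact htop k b f hik hb
        · rw [hstep k b (by omega) hb]
          exact toFock_directSumOp (hcomm _ (by omega)).1 (hcomm _ (by omega)).2
            (ih b · (by omega)) (ih (b + 1) · (by omega)) f

variable {i : ℕ}

lemma toFock_XpOp (hi : 1 ≤ i) {n a : ℕ} (hin : i < n) (f : V n a) :
    toFock n a (XpOp n a i f) = Fock.Xp i (toFock n a f) := by
  refine toFock_eq_of_recursion hi (fun n a => XpOp n a i) _
    (fun x hx => ⟨Fock.Xp_commute_avoid hx, Fock.Xp_commute_eraseAt hx⟩)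
    (fun k f => by simp [XpOp, Fock.Xp_toFock_zero])
    (fun k f hk => by simp [XpOp, Fock.Xp_toFock_self hi hk]) ?_
    (fun k b hk hb => by simp only [XpOp, if_neg (show b + 1 ≠ k + 2 by omega),
      if_neg (show i ≠ k + 1 by omega)]; rfl) n a f hin
  rintro k b f rfl hb
  simp only [XpOp, if_neg (show b + 1 ≠ k + 2 by omega), if_true, LinearMap.comp_apply,
    toFock_iminus, toFock_izero, toFock_pminus, toFock_pzero]
  rw [Fock.Xp_succ_eq]
  rfl

lemma toFock_XmOp (hi : 1 ≤ i) {n a : ℕ} (hin : i < n) (f : V n a) :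
    toFock n a (XmOp n a i f) = Fock.Xm i (toFock n a f) := by
  refine toFock_eq_of_recursion hi (fun n a => XmOp n a i) _
    (fun x hx => ⟨Fock.Xm_commute_avoid hx, Fock.Xm_commute_eraseAt hx⟩)
    (fun k f => by simp [XmOp, Fock.Xm_toFock_zero])
    (fun k f hk => by simp [XmOp, Fock.Xm_toFock_self hi hk]) ?_
    (fun k b hk hb => by simp only [XmOp, if_neg (show b + 1 ≠ k + 2 by omega),
      if_neg (show i ≠ k + 1 by omega)]; rfl) n a f hin
  rintro k b f rfl hb
  simp only [XmOp, if_neg (show b + 1 ≠ k + 2 by omega), if_true, LinearMap.comp_apply,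
    toFock_iminus, toFock_izero, toFock_pminus, toFock_pzero]
  rw [Fock.Xm_succ_eq]
  rfl

lemma toFock_KOp (hi : 1 ≤ i) {n a : ℕ} (hin : i < n) (f : V n a) :
    toFock n a (KOp n a i f) = Fock.K i qq (toFock n a f) := by
  refine toFock_eq_of_recursion hi (fun n a => KOp n a i) _
    (fun x hx => ⟨Fock.K_commute_avoid _, Fock.K_commute_eraseAt _ hx⟩)
    (fun k f => by simp [KOp, Fock.K_toFock_zero])
    (fun k f hk => by simp [KOp, Fock.K_toFock_self hi hk]) ?_
    (fun k b hk hb => by simp only [KOp, if_neg (show b + 1 ≠ k + 2 by omega),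
      if_neg (show i ≠ k + 1 by omega)]; rfl) n a f hin
  rintro k b f rfl hb
  simp only [KOp, if_neg (show b + 1 ≠ k + 2 by omega), if_true, LinearMap.add_apply,
    LinearMap.comp_apply, map_add, toFock_iminus, toFock_izero, toFock_pminus, toFock_pzero,
    toFock_diagOp]
  rw [Fock.K_succ_eq]
  rfl

lemma toFock_KinvOp (hi : 1 ≤ i) {n a : ℕ} (hin : i < n) (f : V n a) :
    toFock n a (KinvOp n a i f) = Fock.K i qq⁻¹ (toFock n a f) := by
  refine toFock_eq_of_recursion hi (fun n a => KinvOp n a i) _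
    (fun x hx => ⟨Fock.K_commute_avoid _, Fock.K_commute_eraseAt _ hx⟩)
    (fun k f => by simp [KinvOp, Fock.K_toFock_zero])
    (fun k f hk => by simp [KinvOp, Fock.K_toFock_self hi hk]) ?_
    (fun k b hk hb => by simp only [KinvOp, if_neg (show b + 1 ≠ k + 2 by omega),
      if_neg (show i ≠ k + 1 by omega)]; rfl) n a f hin
  rintro k b f rfl hb
  simp only [KinvOp, if_neg (show b + 1 ≠ k + 2 by omega), if_true, LinearMap.add_apply,
    LinearMap.comp_apply, map_add, toFock_iminus, toFock_izero, toFock_pminus, toFock_pzero,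
    toFock_diagOp]
  rw [Fock.K_succ_eq, inv_inv]
  rfl

def vGen (n a : ℕ) : UqGen (n - 1) → Module.End A (V n a)
  | .K i => KOp n a (i + 1)
  | .Kinv i => KinvOp n a (i + 1)
  | .Xp i => XpOp n a (i + 1)
  | .Xm i => XmOp n a (i + 1)

lemma toFock_lift_vGen {n a : ℕ} (x : FA (n - 1)) (f : V n a) :
    toFock n a (FreeAlgebra.lift A (vGen n a) x f)
      = FreeAlgebra.lift A (Fock.gen (n - 1)) x (toFock n a f) := by
  induction x using FreeAlgebra.induction generalizing f with
  | grade0 r => simp [Algebra.algebraMap_eq_smul_one]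
  | grade1 g =>
    have hi : ∀ i : Fin (n - 1), (i : ℕ) + 1 < n := fun i => by omega
    cases g <;> simp [vGen, Fock.gen, toFock_KOp, toFock_KinvOp, toFock_XpOp, toFock_XmOp, hi]
  | mul x y hx hy => simp [hx, hy]
  | add x y hx hy => simp [hx, hy]

lemma lift_vGen_eq_of_uqRel {n a : ℕ} {x y : FA (n - 1)} (h : uqRel (n - 1) x y) :
    FreeAlgebra.lift A (vGen n a) x = FreeAlgebra.lift A (vGen n a) y :=
  LinearMap.ext fun f => toFock_injective <| by
    rw [toFock_lift_vGen, toFock_lift_vGen, Fock.lift_gen_eq_of_uqRel h]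

lemma forall_of_forall_fin {n : ℕ} {P : ℕ → Prop} (h : ∀ k : Fin (n - 1), P (k + 1)) :
    ∀ i, 1 ≤ i → i ≤ n - 1 → P i := fun i h₁ h₂ => by
  simpa [Nat.sub_add_cancel h₁] using h ⟨i - 1, by omega⟩

lemma forall₂_of_forall_fin {n : ℕ} {P : ℕ → ℕ → Prop}
    (h : ∀ k l : Fin (n - 1), P (k + 1) (l + 1)) :
    ∀ i j, 1 ≤ i → i ≤ n - 1 → 1 ≤ j → j ≤ n - 1 → P i j :=
  fun i j h₁ h₂ h₃ h₄ =>
    forall_of_forall_fin (fun l => forall_of_forall_fin (P := (P · (l + 1))) (h · l) i h₁ h₂)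
      j h₃ h₄

theorem statement3_general (n : ℕ) (a : ℕ) :
    -- each `K_i` is invertible
    (∀ i, 1 ≤ i → i ≤ n-1 →
      KOp n a i * KinvOp n a i = 1 ∧ KinvOp n a i * KOp n a i = 1) ∧
    -- the `K_i` pairwise commute
    (∀ i j, 1 ≤ i → i ≤ n-1 → 1 ≤ j → j ≤ n-1 →
      KOp n a i * KOp n a j = KOp n a j * KOp n a i) ∧
    -- `K_i X_j^± = q^{±a_{ij}} X_j^± K_i`
    (∀ i j, 1 ≤ i → i ≤ n-1 → 1 ≤ j → j ≤ n-1 →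
      KOp n a i * XpOp n a j = qq ^ (cartN i j) • (XpOp n a j * KOp n a i) ∧
      KOp n a i * XmOp n a j = qq ^ (-(cartN i j)) • (XmOp n a j * KOp n a i)) ∧
    -- `X_i⁺ X_j⁻ - X_j⁻ X_i⁺ = δ_{ij} (K_i - K_i⁻¹)/(q - q⁻¹)`
    (∀ i j, 1 ≤ i → i ≤ n-1 → 1 ≤ j → j ≤ n-1 →
      XpOp n a i * XmOp n a j - XmOp n a j * XpOp n a i
        = if i = j then (qq - qq⁻¹)⁻¹ • (KOp n a i - KinvOp n a i) else 0) ∧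
    -- `X_i^± X_j^± = X_j^± X_i^±` when `|i-j| ≥ 2`
    (∀ i j, 1 ≤ i → i ≤ n-1 → 1 ≤ j → j ≤ n-1 → (i + 2 ≤ j ∨ j + 2 ≤ i) →
      XpOp n a i * XpOp n a j = XpOp n a j * XpOp n a i ∧
      XmOp n a i * XmOp n a j = XmOp n a j * XmOp n a i) ∧
    -- the quantum Serre relations when `|i-j| = 1`
    (∀ i j, 1 ≤ i → i ≤ n-1 → 1 ≤ j → j ≤ n-1 → (i + 1 = j ∨ j + 1 = i) →
      XpOp n a i ^ 2 * XpOp n a j - (qq + qq⁻¹) • (XpOp n a i * XpOp n a j * XpOp n a i)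
        + XpOp n a j * XpOp n a i ^ 2 = 0 ∧
      XmOp n a i ^ 2 * XmOp n a j - (qq + qq⁻¹) • (XmOp n a i * XmOp n a j * XmOp n a i)
        + XmOp n a j * XmOp n a i ^ 2 = 0) ∧
    -- hence they determine an `𝔸`-algebra homomorphism `U_q(sl_n) → End(V_a^n)`
    (∃ φ : Uq (n-1) →ₐ[A] Module.End A (V n a),
      (∀ i : Fin (n-1), φ (Uq.K i) = KOp n a ((i : ℕ)+1)) ∧
      (∀ i : Fin (n-1), φ (Uq.Kinv i) = KinvOp n a ((i : ℕ)+1)) ∧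
      (∀ i : Fin (n-1), φ (Uq.Xp i) = XpOp n a ((i : ℕ)+1)) ∧
      (∀ i : Fin (n-1), φ (Uq.Xm i) = XmOp n a ((i : ℕ)+1))) := by
  have rel {x y : FA (n - 1)} (h : uqRel (n - 1) x y) :
      FreeAlgebra.lift A (vGen n a) x = FreeAlgebra.lift A (vGen n a) y :=
    lift_vGen_eq_of_uqRel h
  refine ⟨forall_of_forall_fin fun k => ⟨?_, ?_⟩, forall₂_of_forall_fin fun k l => ?_,
    forall₂_of_forall_fin fun k l => ⟨?_, ?_⟩, forall₂_of_forall_fin fun k l => ?_,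
    forall₂_of_forall_fin fun k l h => ⟨?_, ?_⟩,
    forall₂_of_forall_fin fun k l h => ⟨?_, ?_⟩,
    RingQuot.liftAlgHom A ⟨_, fun _ _ => rel⟩, ?_⟩
  · simpa [vGen, FA.K, FA.Kinv] using rel (.KKinv k)
  · simpa [vGen, FA.K, FA.Kinv] using rel (.KinvK k)
  · simpa [vGen, FA.K] using rel (.KK k l)
  · simpa [vGen, FA.K, FA.Xp, cart_eq_cartN] using rel (.KXp k l)
  · simpa [vGen, FA.K, FA.Xm, cart_eq_cartN] using rel (.KXm k l)
  · simpa [vGen, FA.K, FA.Kinv, FA.Xp, FA.Xm, apply_ite, Fin.ext_iff] using rel (.XpXm k l)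
  · simpa [vGen, FA.Xp] using rel (.XpXp k l (by omega))
  · simpa [vGen, FA.Xm] using rel (.XmXm k l (by omega))
  · simpa [vGen, FA.Xp] using rel (.serreP k l (by omega))
  · simpa [vGen, FA.Xm] using rel (.serreM k l (by omega))
  · refine ⟨fun i => ?_, fun i => ?_, fun i => ?_, fun i => ?_⟩ <;>
      simp [Uq.K, Uq.Kinv, Uq.Xp, Uq.Xm, FA.K, FA.Kinv, FA.Xp, FA.Xm,
        RingQuot.liftAlgHom_mkAlgHom_apply, vGen]

/-- for every `n ≥ 1` and `0 ≤ a ≤ n`, the recursively defined operators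
`X_i^±, K_i` on `V_a^n` satisfy all the defining relations of `U_q(sl_n)`, and hence
determine an `𝔸`-algebra homomorphism `U_q(sl_n) → End_𝔸(V_a^n)`. -/
theorem statement3 (n : ℕ) (hn : 1 ≤ n) (a : ℕ) (ha : a ≤ n) :
    -- each `K_i` is invertible
    (∀ i, 1 ≤ i → i ≤ n-1 →
      KOp n a i * KinvOp n a i = 1 ∧ KinvOp n a i * KOp n a i = 1) ∧
    -- the `K_i` pairwise commute
    (∀ i j, 1 ≤ i → i ≤ n-1 → 1 ≤ j → j ≤ n-1 →
      KOp n a i * KOp n a j = KOp n a j * KOp n a i) ∧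
    -- `K_i X_j^± = q^{±a_{ij}} X_j^± K_i`
    (∀ i j, 1 ≤ i → i ≤ n-1 → 1 ≤ j → j ≤ n-1 →
      KOp n a i * XpOp n a j = qq ^ (cartN i j) • (XpOp n a j * KOp n a i) ∧
      KOp n a i * XmOp n a j = qq ^ (-(cartN i j)) • (XmOp n a j * KOp n a i)) ∧
    -- `X_i⁺ X_j⁻ - X_j⁻ X_i⁺ = δ_{ij} (K_i - K_i⁻¹)/(q - q⁻¹)`
    (∀ i j, 1 ≤ i → i ≤ n-1 → 1 ≤ j → j ≤ n-1 →
      XpOp n a i * XmOp n a j - XmOp n a j * XpOp n a i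
        = if i = j then (qq - qq⁻¹)⁻¹ • (KOp n a i - KinvOp n a i) else 0) ∧
    -- `X_i^± X_j^± = X_j^± X_i^±` when `|i-j| ≥ 2`
    (∀ i j, 1 ≤ i → i ≤ n-1 → 1 ≤ j → j ≤ n-1 → (i + 2 ≤ j ∨ j + 2 ≤ i) →
      XpOp n a i * XpOp n a j = XpOp n a j * XpOp n a i ∧
      XmOp n a i * XmOp n a j = XmOp n a j * XmOp n a i) ∧
    -- the quantum Serre relations when `|i-j| = 1`
    (∀ i j, 1 ≤ i → i ≤ n-1 → 1 ≤ j → j ≤ n-1 → (i + 1 = j ∨ j + 1 = i) →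
      XpOp n a i ^ 2 * XpOp n a j - (qq + qq⁻¹) • (XpOp n a i * XpOp n a j * XpOp n a i)
        + XpOp n a j * XpOp n a i ^ 2 = 0 ∧
      XmOp n a i ^ 2 * XmOp n a j - (qq + qq⁻¹) • (XmOp n a i * XmOp n a j * XmOp n a i)
        + XmOp n a j * XmOp n a i ^ 2 = 0) ∧
    -- hence they determine an `𝔸`-algebra homomorphism `U_q(sl_n) → End(V_a^n)`
    (∃ φ : Uq (n-1) →ₐ[A] Module.End A (V n a),
      (∀ i : Fin (n-1), φ (Uq.K i) = KOp n a ((i : ℕ)+1)) ∧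
      (∀ i : Fin (n-1), φ (Uq.Kinv i) = KinvOp n a ((i : ℕ)+1)) ∧
      (∀ i : Fin (n-1), φ (Uq.Xp i) = XpOp n a ((i : ℕ)+1)) ∧
      (∀ i : Fin (n-1), φ (Uq.Xm i) = XmOp n a ((i : ℕ)+1))) :=
  statement3_general n a
end
end

section
/- For every n ≥ 3 and 0 ≤ a ≤ n, the recursively defined operators on V_a^n satisfy K_{n−1} X_{n−1}^+ = q² X_{n−1}^+ K_{n−1}, K_{n−1} X_{n−1}^- = q^{-2} X_{n−1}^- K_{n−1}, K_{n−2} X_{n−1}^+ = q^{-1} X_{n−1}^+ K_{n−2}, K_{n−2} X_{n−1}^- = q X_{n−1}^- K_{n−2}, K_{n−1} X_{n−2}^+ = q^{-1} X_{n−2}^+ K_{n−1}, and K_{n−1} X_{n−2}^- = q X_{n−2}^- K_{n−1} as endomorphisms of V_a^n. -/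
noncomputable section

open scoped TensorProduct

set_option maxHeartbeats 1000000
set_option synthInstance.maxHeartbeats 400000

/-!
Unwinding the recursion, `K_{k+1}` acts on the basis vector of a subset `s` (of `{0, …, n-1}`)
diagonally by `q^{[k+1 ∈ s] - [k ∈ s]}`, while `X_{k+1}^+` and `X_{k+1}^-` replace `k` by `k+1`
and `k+1` by `k` respectively. The recursion only ever adds the top element `n-1`, which these
closed forms ignore unless `k+1 = n-1`, so they are proved by induction on `n`. Each relation
then compares the weight of a subset before and after such a replacement.
-/

lemma qq_ne_zero : qq ≠ 0 := RatFunc.X_ne_zero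

namespace BS

lemma eq_empty {n : ℕ} (s : BS n 0) : s.1 = ∅ := Finset.card_eq_zero.mp s.2.2

lemma eq_range_of_le {n a : ℕ} (h : n ≤ a) (s : BS n a) : s.1 = Finset.range n :=
  Finset.eq_of_subset_of_card_le s.2.1 (by rw [s.2.2, Finset.card_range]; exact h)

end BS

/-- On basis vectors, `replaceOp n a u v` sends `e_t` to `e_{t \ {u} ∪ {v}}` when `u ∈ t`,
`v ∉ t`, and to `0` otherwise; on coefficient functions this reads as below. -/
def replaceOp (n a u v : ℕ) (hu : u < n) : Module.End A (V n a) where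
  toFun f s := if h : v ∈ s.1 ∧ u ∉ s.1 then
      f ⟨insert u (s.1.erase v), by
        refine ⟨Finset.insert_subset (Finset.mem_range.mpr hu)
          ((Finset.erase_subset _ _).trans s.2.1), ?_⟩
        rw [Finset.card_insert_of_notMem (fun hu' => h.2 (Finset.mem_of_mem_erase hu')),
          Finset.card_erase_of_mem h.1, s.2.2]
        have : 0 < a := s.2.2 ▸ Finset.card_pos.mpr ⟨v, h.1⟩
        omega⟩
    else 0
  map_add' f g := by
    funext s
    by_cases h : v ∈ s.1 ∧ u ∉ s.1 <;> simp [h]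
  map_smul' c f := by
    funext s
    by_cases h : v ∈ s.1 ∧ u ∉ s.1 <;> simp [h]

def blockDiag (n a : ℕ) (F : Module.End A (V n a)) (G : Module.End A (V n (a+1))) :
    Module.End A (V (n+1) (a+1)) :=
  iminus n a ∘ₗ F ∘ₗ pminus n a + izero n (a+1) ∘ₗ G ∘ₗ pzero n (a+1)

section projections

variable {n a : ℕ}

@[simp] lemma pminus_iminus (f : V n a) : pminus n a (iminus n a f) = f := by
  funext t
  have hn : n ∉ t.1 := fun h => by simpa using t.2.1 h
  simp [pminus, iminus, Finset.erase_insert hn]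

@[simp] lemma pzero_izero (f : V n a) : pzero n a (izero n a f) = f := by
  funext t
  have hn : n ∉ t.1 := fun h => by simpa using t.2.1 h
  simp [pzero, izero, hn]

@[simp] lemma pminus_izero (f : V n (a+1)) : pminus n a (izero n (a+1) f) = 0 := by
  funext t
  simp [pminus, izero]

@[simp] lemma pzero_iminus (f : V n a) : pzero n (a+1) (iminus n a f) = 0 := by
  funext t
  have hn : n ∉ t.1 := fun h => by simpa using t.2.1 h
  simp [pzero, iminus, hn]

end projections

lemma blockDiag_mul {n a : ℕ} (F F' : Module.End A (V n a)) (G G' : Module.End A (V n (a+1))) :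
    blockDiag n a F G * blockDiag n a F' G' = blockDiag n a (F * F') (G * G') := by
  refine LinearMap.ext fun f => ?_
  simp [blockDiag]

section diagOp

variable {n a : ℕ}

lemma smul_diagOp (m : ℕ) (c x y : A) :
    c • diagOp n a m x y = diagOp n a m (c * x) (c * y) := by
  refine LinearMap.ext fun f => funext fun s => ?_
  by_cases h : m ∈ s.1 <;> simp [diagOp, h, mul_assoc]

lemma diagOp_card_zero (m : ℕ) (x y : A) : diagOp n 0 m x y = y • 1 := by
  refine LinearMap.ext fun f => funext fun s => ?_
  simp [diagOp, BS.eq_empty s]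

lemma diagOp_of_le {m : ℕ} (hm : m < n) (h : n ≤ a) (x y : A) : diagOp n a m x y = x • 1 := by
  refine LinearMap.ext fun f => funext fun s => ?_
  simp [diagOp, BS.eq_range_of_le h s, hm]

lemma diagOp_top_eq_blockDiag (x y : A) :
    diagOp (n+1) (a+1) n x y = blockDiag n a (x • 1) (y • 1) := by
  refine LinearMap.ext fun f => funext fun s => ?_
  by_cases h : n ∈ s.1 <;>
    simp [diagOp, blockDiag, iminus, izero, pminus, pzero, h, Finset.insert_erase]

lemma diagOp_eq_blockDiag {m : ℕ} (hm : m < n) (x y : A) :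
    diagOp (n+1) (a+1) m x y = blockDiag n a (diagOp n a m x y) (diagOp n (a+1) m x y) := by
  refine LinearMap.ext fun f => funext fun s => ?_
  have hmn : m ≠ n := hm.ne
  by_cases h : n ∈ s.1 <;>
    simp [diagOp, blockDiag, iminus, izero, pminus, pzero, h, Finset.insert_erase, hmn]

end diagOp

section replaceOp

variable {n a u v : ℕ}

lemma replaceOp_card_zero (hu : u < n) : replaceOp n 0 u v hu = 0 := by
  refine LinearMap.ext fun f => funext fun s => ?_
  simp [replaceOp, BS.eq_empty s]

lemma replaceOp_of_le (hu : u < n) (h : n ≤ a) : replaceOp n a u v hu = 0 := by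
  refine LinearMap.ext fun f => funext fun s => ?_
  simp [replaceOp, BS.eq_range_of_le h s, hu]

lemma replaceOp_eq_blockDiag (hu : u < n) (hv : v < n) :
    replaceOp (n+1) (a+1) u v (hu.trans n.lt_succ_self) =
      blockDiag n a (replaceOp n a u v hu) (replaceOp n (a+1) u v hu) := by
  refine LinearMap.ext fun f => funext fun s => ?_
  by_cases h : n ∈ s.1
  · have hs : insert n (insert u ((s.1.erase n).erase v)) = insert u (s.1.erase v) := by
      rw [Finset.insert_comm, Finset.erase_right_comm,
        Finset.insert_erase (Finset.mem_erase.mpr ⟨hv.ne', h⟩)]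
    simp [replaceOp, blockDiag, iminus, izero, pminus, pzero, h, hu.ne, hv.ne, hs]
  · simp [replaceOp, blockDiag, iminus, izero, pminus, pzero, h]

lemma iminus_comp_izero_comp_pminus_comp_pzero :
    iminus (n+1) a ∘ₗ izero n a ∘ₗ pminus n a ∘ₗ pzero (n+1) (a+1) =
      replaceOp (n+2) (a+1) n (n+1) (by omega) := by
  refine LinearMap.ext fun f => funext fun s => ?_
  by_cases h : n + 1 ∈ s.1 <;> simp [replaceOp, iminus, izero, pminus, pzero, h]

lemma izero_comp_iminus_comp_pzero_comp_pminus :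
    izero (n+1) (a+1) ∘ₗ iminus n a ∘ₗ pzero n a ∘ₗ pminus (n+1) a =
      replaceOp (n+2) (a+1) (n+1) n (by omega) := by
  refine LinearMap.ext fun f => funext fun s => ?_
  by_cases h : n ∈ s.1 <;> simp [replaceOp, iminus, izero, pminus, pzero, h]

end replaceOp

theorem KOp_eq_diagOp_mul_diagOp {n k : ℕ} (hk : k + 2 ≤ n) (a : ℕ) :
    KOp n a (k+1) = diagOp n a (k+1) qq 1 * diagOp n a k qq⁻¹ 1 := by
  induction n generalizing a with
  | zero => omega
  | succ n ih =>
    obtain ⟨n, rfl⟩ : ∃ m, n = m + 1 := ⟨n - 1, by omega⟩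
    cases a with
    | zero => simp [KOp, diagOp_card_zero]
    | succ a =>
      simp only [KOp]
      split_ifs with hfull htop
      · obtain rfl : a = n + 1 := by omega
        rw [diagOp_of_le (by omega) le_rfl, diagOp_of_le (by omega) le_rfl, smul_mul_smul,
          mul_inv_cancel₀ qq_ne_zero, one_smul, one_mul]
      · obtain rfl : k = n := by omega
        show blockDiag _ a (diagOp _ a _ 1 qq) (diagOp _ (a+1) _ qq⁻¹ 1) = _
        rw [diagOp_top_eq_blockDiag (n := k+1), diagOp_eq_blockDiag (show k < k + 1 by omega), blockDiag_mul,
          smul_mul_assoc, smul_mul_assoc, one_mul, one_mul, one_smul, smul_diagOp,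
          mul_inv_cancel₀ qq_ne_zero, mul_one]
      · show blockDiag (n+1) a (KOp (n+1) a (k+1)) (KOp (n+1) (a+1) (k+1)) = _
        rw [ih (by omega), ih (by omega), diagOp_eq_blockDiag (n := n+1) (by omega),
          diagOp_eq_blockDiag (n := n+1) (by omega), blockDiag_mul]

theorem XpOp_eq_replaceOp {n k : ℕ} (hk : k + 2 ≤ n) (a : ℕ) :
    XpOp n a (k+1) = replaceOp n a k (k+1) (by omega) := by
  induction n generalizing a with
  | zero => omega
  | succ n ih =>
    obtain ⟨n, rfl⟩ : ∃ m, n = m + 1 := ⟨n - 1, by omega⟩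
    cases a with
    | zero => simp [XpOp, replaceOp_card_zero]
    | succ a =>
      simp only [XpOp]
      split_ifs with hfull htop
      · obtain rfl : a = n + 1 := by omega
        rw [replaceOp_of_le _ le_rfl]
      · obtain rfl : k = n := by omega
        exact iminus_comp_izero_comp_pminus_comp_pzero
      · show blockDiag (n+1) a (XpOp (n+1) a (k+1)) (XpOp (n+1) (a+1) (k+1)) = _
        rw [ih (by omega), ih (by omega), replaceOp_eq_blockDiag (n := n+1) (by omega) (by omega)]

theorem XmOp_eq_replaceOp {n k : ℕ} (hk : k + 2 ≤ n) (a : ℕ) :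
    XmOp n a (k+1) = replaceOp n a (k+1) k (by omega) := by
  induction n generalizing a with
  | zero => omega
  | succ n ih =>
    obtain ⟨n, rfl⟩ : ∃ m, n = m + 1 := ⟨n - 1, by omega⟩
    cases a with
    | zero => simp [XmOp, replaceOp_card_zero]
    | succ a =>
      simp only [XmOp]
      split_ifs with hfull htop
      · obtain rfl : a = n + 1 := by omega
        rw [replaceOp_of_le _ le_rfl]
      · obtain rfl : k = n := by omega
        exact izero_comp_iminus_comp_pzero_comp_pminus
      · show blockDiag (n+1) a (XmOp (n+1) a (k+1)) (XmOp (n+1) (a+1) (k+1)) = _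
        rw [ih (by omega), ih (by omega), replaceOp_eq_blockDiag (n := n+1) (by omega) (by omega)]

lemma mul_mul_eq_smul_of_eq_smul {R B : Type*} [CommSemiring R] [Semiring B] [Algebra R B]
    {a b x : B} {c d e : R} (ha : a * x = c • (x * a)) (hb : b * x = d • (x * b))
    (he : e = c * d) : a * b * x = e • (x * (a * b)) := by
  rw [mul_assoc, hb, mul_smul_comm, ← mul_assoc, ha, smul_mul_assoc, smul_smul, mul_assoc, he, mul_comm c d]

section commutation

variable {n a m u v : ℕ} (hu : u < n) {x y : A}

lemma diagOp_mul_replaceOp {c : A}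
    (h : ∀ s : Finset ℕ, v ∈ s → u ∉ s →
      (if m ∈ s then x else y) = c * if m ∈ insert u (s.erase v) then x else y) :
    diagOp n a m x y * replaceOp n a u v hu = c • (replaceOp n a u v hu * diagOp n a m x y) := by
  refine LinearMap.ext fun f => funext fun s => ?_
  by_cases hs : v ∈ s.1 ∧ u ∉ s.1
  · simp only [Module.End.mul_apply, LinearMap.smul_apply, Pi.smul_apply, smul_eq_mul, diagOp,
      replaceOp, LinearMap.coe_mk, AddHom.coe_mk, dif_pos hs]
    rw [h s.1 hs.1 hs.2, mul_assoc]
  · simp [diagOp, replaceOp, hs]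

lemma diagOp_mul_replaceOp_of_ne (hmu : m ≠ u) (hmv : m ≠ v) :
    diagOp n a m x y * replaceOp n a u v hu =
      (1 : A) • (replaceOp n a u v hu * diagOp n a m x y) :=
  diagOp_mul_replaceOp hu fun s _ _ => by simp [hmu, hmv]

lemma diagOp_mul_replaceOp_removed (huv : u ≠ v) {c : A} (h : x = c * y) :
    diagOp n a v x y * replaceOp n a u v hu = c • (replaceOp n a u v hu * diagOp n a v x y) :=
  diagOp_mul_replaceOp hu fun s hv _ => by simp [hv, huv.symm, h]

lemma diagOp_mul_replaceOp_inserted {c : A} (h : y = c * x) :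
    diagOp n a u x y * replaceOp n a u v hu = c • (replaceOp n a u v hu * diagOp n a u x y) :=
  diagOp_mul_replaceOp hu fun s _ hu' => by simp [hu', h]

end commutation

theorem statement5_general (n : ℕ) (hn : 3 ≤ n) (a : ℕ) :
    KOp n a (n-1) * XpOp n a (n-1) = (qq ^ 2 : A) • (XpOp n a (n-1) * KOp n a (n-1)) ∧
    KOp n a (n-1) * XmOp n a (n-1) = ((qq ^ 2 : A))⁻¹ • (XmOp n a (n-1) * KOp n a (n-1)) ∧
    KOp n a (n-2) * XpOp n a (n-1) = qq⁻¹ • (XpOp n a (n-1) * KOp n a (n-2)) ∧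
    KOp n a (n-2) * XmOp n a (n-1) = qq • (XmOp n a (n-1) * KOp n a (n-2)) ∧
    KOp n a (n-1) * XpOp n a (n-2) = qq⁻¹ • (XpOp n a (n-2) * KOp n a (n-1)) ∧
    KOp n a (n-1) * XmOp n a (n-2) = qq • (XmOp n a (n-2) * KOp n a (n-1)) := by
  obtain ⟨k, rfl⟩ : ∃ k, n = k + 3 := ⟨n - 3, by omega⟩
  have hq : qq * qq⁻¹ = 1 := mul_inv_cancel₀ qq_ne_zero
  have hq' : qq⁻¹ * qq = 1 := inv_mul_cancel₀ qq_ne_zero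
  simp only [show k + 3 - 1 = k + 1 + 1 from rfl, show k + 3 - 2 = k + 1 from rfl,
    KOp_eq_diagOp_mul_diagOp (show k + 1 + 2 ≤ k + 3 by omega),
    KOp_eq_diagOp_mul_diagOp (show k + 2 ≤ k + 3 by omega),
    XpOp_eq_replaceOp (show k + 1 + 2 ≤ k + 3 by omega),
    XpOp_eq_replaceOp (show k + 2 ≤ k + 3 by omega),
    XmOp_eq_replaceOp (show k + 1 + 2 ≤ k + 3 by omega),
    XmOp_eq_replaceOp (show k + 2 ≤ k + 3 by omega)]
  refine ⟨?_, ?_, ?_, ?_, ?_, ?_⟩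
  · exact mul_mul_eq_smul_of_eq_smul
      (diagOp_mul_replaceOp_removed _ (by omega) (mul_one _).symm)
      (diagOp_mul_replaceOp_inserted _ hq.symm) (sq qq)
  · exact mul_mul_eq_smul_of_eq_smul (diagOp_mul_replaceOp_inserted _ hq'.symm)
      (diagOp_mul_replaceOp_removed _ (by omega) (mul_one _).symm) (by rw [sq, mul_inv])
  · exact mul_mul_eq_smul_of_eq_smul (diagOp_mul_replaceOp_inserted _ hq'.symm)
      (diagOp_mul_replaceOp_of_ne _ (by omega) (by omega)) (mul_one _).symm
  · exact mul_mul_eq_smul_of_eq_smul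
      (diagOp_mul_replaceOp_removed _ (by omega) (mul_one _).symm)
      (diagOp_mul_replaceOp_of_ne _ (by omega) (by omega)) (mul_one _).symm
  · exact mul_mul_eq_smul_of_eq_smul (diagOp_mul_replaceOp_of_ne _ (by omega) (by omega))
      (diagOp_mul_replaceOp_removed _ (by omega) (mul_one _).symm) (one_mul _).symm
  · exact mul_mul_eq_smul_of_eq_smul (diagOp_mul_replaceOp_of_ne _ (by omega) (by omega))
      (diagOp_mul_replaceOp_inserted _ hq.symm) (one_mul _).symm

/-- for every `n ≥ 3` and `0 ≤ a ≤ n`, the recursively defined operators on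
`V_a^n` satisfy the six commutation relations between `K_{n-1}, K_{n-2}` and
`X_{n-1}^±, X_{n-2}^±`. -/
theorem statement5 (n : ℕ) (hn : 3 ≤ n) (a : ℕ) (ha : a ≤ n) :
    KOp n a (n-1) * XpOp n a (n-1) = (qq ^ 2 : A) • (XpOp n a (n-1) * KOp n a (n-1)) ∧
    KOp n a (n-1) * XmOp n a (n-1) = ((qq ^ 2 : A))⁻¹ • (XmOp n a (n-1) * KOp n a (n-1)) ∧
    KOp n a (n-2) * XpOp n a (n-1) = qq⁻¹ • (XpOp n a (n-1) * KOp n a (n-2)) ∧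
    KOp n a (n-2) * XmOp n a (n-1) = qq • (XmOp n a (n-1) * KOp n a (n-2)) ∧
    KOp n a (n-1) * XpOp n a (n-2) = qq⁻¹ • (XpOp n a (n-2) * KOp n a (n-1)) ∧
    KOp n a (n-1) * XmOp n a (n-2) = qq • (XmOp n a (n-2) * KOp n a (n-1)) :=
  statement5_general n hn a

end
end
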